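/- If f is differentiable with L-Lipschitz gradient and f is convex, then for all x₁, x₂, (∇f(x₁) - ∇f(x₂))·(x₁-x₂) ≥ (1/L)‖∇f(x₁) - ∇f(x₂)‖² (cocoercivity). -/

import Mathlib

/-!
Along the segment from `x` to `x + v`, the function
`t ↦ f (x + t • v) - t * ⟪∇f x, v⟫ - L / 2 * t ^ 2 * ‖v‖ ^ 2` has nonpositive derivative by
Cauchy–Schwarz and the Lipschitz bound, which gives the descent lemma
`f (x + v) ≤ f x + ⟪∇f x, v⟫ + L / 2 * ‖v‖ ^ 2`. Evaluating the supporting hyperplane of `f` at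
`x₁` at the gradient step `x₂ - (∇f x₂ - ∇f x₁) / L`, and bounding `f` there by the descent lemma
at `x₂`, gives `f x₁ + ⟪∇f x₁, x₂ - x₁⟫ + ‖∇f x₂ - ∇f x₁‖ ^ 2 / (2 * L) ≤ f x₂`.
Adding this to the same inequality with `x₁` and `x₂` exchanged yields cocoercivity.
-/

open RealInnerProductSpace

section

variable {E : Type*} [NormedAddCommGroup E] [InnerProductSpace ℝ E] [CompleteSpace E] {f : E → ℝ}

theorem HasGradientAt.hasDerivAt_comp_add_smul {g x v : E} {t : ℝ}
    (hf : HasGradientAt f g (x + t • v)) :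
    HasDerivAt (fun s : ℝ => f (x + s • v)) ⟪g, v⟫ t := by
  have hline : HasDerivAt (fun s : ℝ => x + s • v) v t := by
    simpa using ((hasDerivAt_id t).smul_const v).const_add x
  simpa [InnerProductSpace.toDual_apply_apply, Function.comp_def] using
    hf.hasFDerivAt.comp_hasDerivAt t hline

theorem ConvexOn.add_inner_sub_le {g : E} (hconv : ConvexOn ℝ Set.univ f) {x : E}
    (hf : HasGradientAt f g x) (y : E) : f x + ⟪g, y - x⟫ ≤ f y := by
  have hline : ConvexOn ℝ Set.univ (fun t : ℝ => f (x + t • (y - x))) := by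
    simpa [Function.comp_def, AffineMap.lineMap_apply, add_comm] using
      hconv.comp_affineMap (AffineMap.lineMap x y)
  have hderiv : HasDerivAt (fun t : ℝ => f (x + t • (y - x))) ⟪g, y - x⟫ 0 :=
    HasGradientAt.hasDerivAt_comp_add_smul (by simpa using hf)
  have := hline.le_slope_of_hasDerivAt (Set.mem_univ 0) (Set.mem_univ 1) one_pos hderiv
  simp only [slope_def_field, one_smul, add_sub_cancel, zero_smul, add_zero, sub_zero,
    div_one] at this
  linarith

theorem le_add_inner_add_sq_of_lipschitz_gradient {L : ℝ} (hf : Differentiable ℝ f)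
    (hgrad : ∀ x₁ x₂ : E, ‖gradient f x₁ - gradient f x₂‖ ≤ L * ‖x₁ - x₂‖) (x v : E) :
    f (x + v) ≤ f x + ⟪gradient f x, v⟫ + L / 2 * ‖v‖ ^ 2 := by
  set φ : ℝ → ℝ := fun t => f (x + t • v) - t * ⟪gradient f x, v⟫ - L / 2 * t ^ 2 * ‖v‖ ^ 2
  set φ' : ℝ → ℝ := fun t => ⟪gradient f (x + t • v) - gradient f x, v⟫ - L * t * ‖v‖ ^ 2
  have hφ (t : ℝ) : HasDerivAt φ (φ' t) t := by
    refine ((((hf (x + t • v)).hasGradientAt.hasDerivAt_comp_add_smul (x := x)).sub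
      ((hasDerivAt_id t).mul_const ⟪gradient f x, v⟫)).sub
      (((hasDerivAt_pow 2 t).const_mul (L / 2)).mul_const (‖v‖ ^ 2))).congr_deriv ?_
    simp only [φ', inner_sub_left]
    ring
  have hφ'_nonpos (t : ℝ) (ht : 0 ≤ t) : φ' t ≤ 0 := by
    refine sub_nonpos.2 ?_
    calc ⟪gradient f (x + t • v) - gradient f x, v⟫
        ≤ ‖gradient f (x + t • v) - gradient f x‖ * ‖v‖ := real_inner_le_norm _ _
      _ ≤ L * ‖x + t • v - x‖ * ‖v‖ := by gcongr; exact hgrad _ _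
      _ = L * t * ‖v‖ ^ 2 := by
          simp only [add_sub_cancel_left, norm_smul, Real.norm_eq_abs, abs_of_nonneg ht]
          ring
  have hanti : AntitoneOn φ (Set.Ici 0) :=
    antitoneOn_of_hasDerivWithinAt_nonpos (convex_Ici 0)
      (fun t _ => (hφ t).continuousAt.continuousWithinAt)
      (fun t _ => (hφ t).hasDerivWithinAt)
      (fun t ht => hφ'_nonpos t (interior_subset ht))
  have := hanti (Set.mem_Ici.2 le_rfl) (Set.mem_Ici.2 zero_le_one) zero_le_one
  simp only [φ, zero_smul, add_zero, one_smul, zero_mul, one_mul, sub_zero, one_pow,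
    zero_pow two_ne_zero] at this
  linarith

theorem ConvexOn.add_inner_add_norm_gradient_sub_sq_le {L : ℝ} (hL : 0 < L)
    (hf : Differentiable ℝ f) (hconv : ConvexOn ℝ Set.univ f)
    (hgrad : ∀ x₁ x₂ : E, ‖gradient f x₁ - gradient f x₂‖ ≤ L * ‖x₁ - x₂‖) (x₁ x₂ : E) :
    f x₁ + ⟪gradient f x₁, x₂ - x₁⟫ + 1 / (2 * L) * ‖gradient f x₂ - gradient f x₁‖ ^ 2
      ≤ f x₂ := by
  set d := gradient f x₂ - gradient f x₁
  have hdescent := le_add_inner_add_sq_of_lipschitz_gradient hf hgrad x₂ (-L⁻¹ • d)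
  have hsupport := hconv.add_inner_sub_le (hf x₁).hasGradientAt (x₂ + -L⁻¹ • d)
  have hinner : ⟪gradient f x₁, x₂ + -L⁻¹ • d - x₁⟫
      = ⟪gradient f x₁, x₂ - x₁⟫ + ⟪gradient f x₂, -L⁻¹ • d⟫ + L⁻¹ * ‖d‖ ^ 2 := by
    rw [← real_inner_self_eq_norm_sq]
    simp only [d, inner_sub_left, inner_sub_right, inner_add_right, inner_smul_right]
    ring
  have hnorm : L / 2 * ‖-L⁻¹ • d‖ ^ 2 = L⁻¹ * ‖d‖ ^ 2 - 1 / (2 * L) * ‖d‖ ^ 2 := by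
    rw [norm_smul, norm_neg, norm_inv, Real.norm_of_nonneg hL.le]
    field_simp
    ring
  linarith

theorem ConvexOn.one_div_mul_norm_gradient_sub_sq_le_inner {L : ℝ} (hL : 0 < L)
    (hf : Differentiable ℝ f) (hconv : ConvexOn ℝ Set.univ f)
    (hgrad : ∀ x₁ x₂ : E, ‖gradient f x₁ - gradient f x₂‖ ≤ L * ‖x₁ - x₂‖) (x₁ x₂ : E) :
    1 / L * ‖gradient f x₁ - gradient f x₂‖ ^ 2 ≤ ⟪gradient f x₁ - gradient f x₂, x₁ - x₂⟫ := by
  have h₁₂ := hconv.add_inner_add_norm_gradient_sub_sq_le hL hf hgrad x₁ x₂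
  have h₂₁ := hconv.add_inner_add_norm_gradient_sub_sq_le hL hf hgrad x₂ x₁
  rw [norm_sub_rev] at h₁₂
  have hinner : ⟪gradient f x₁ - gradient f x₂, x₁ - x₂⟫
      = -⟪gradient f x₁, x₂ - x₁⟫ - ⟪gradient f x₂, x₁ - x₂⟫ := by
    simp only [inner_sub_left, inner_sub_right]
    ring
  have hhalf : 1 / L = 2 * (1 / (2 * L)) := by field_simp
  rw [hinner, hhalf]
  linarith

end

theorem stmt_17 (n : ℕ) (f : EuclideanSpace ℝ (Fin n) → ℝ) (L : ℝ) (hL : 0 < L)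
    (hf : Differentiable ℝ f) (hconv : ConvexOn ℝ Set.univ f)
    (hgrad : ∀ x₁ x₂ : EuclideanSpace ℝ (Fin n),
      ‖gradient f x₁ - gradient f x₂‖ ≤ L * ‖x₁ - x₂‖) :
    ∀ x₁ x₂ : EuclideanSpace ℝ (Fin n),
      (1 / L) * ‖gradient f x₁ - gradient f x₂‖ ^ 2 ≤
        ⟪gradient f x₁ - gradient f x₂, x₁ - x₂⟫ :=
  hconv.one_div_mul_norm_gradient_sub_sq_le_inner hL hf hgrad
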